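/- Suppose b divides a. Let q be a rational number with |q| < 2/(a + √(a² + 4b)) (so q lies in the open interval of convergence of the generating function f(t) = t/(1 - a·t - b·t²)). Then f(q) = q/(1 - a·q - b·q²) is an integer if and only if q = F_{2i}/F_{2i+1} for some natural number i. -/

import Mathlib

/-- The integer sequence `F_i`: `F_0 = 0`, `F_1 = 1`, `F_{i+2} = a·F_{i+1} + b·F_i`. -/
def intF (a b : ℤ) : ℕ → ℤ
  | 0 => 0
  | 1 => 1
  | n + 2 => a * intF a b (n + 1) + b * intF a b n

/-- Pairs `(G_{2i}, G_{2i+1})` of the reduced sequence. -/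
def GP (a c : ℤ) : ℕ → ℤ × ℤ
  | 0 => (0, 1)
  | i + 1 =>
    ((GP a c i).1 + c * (GP a c i).2, a * ((GP a c i).1 + c * (GP a c i).2) + (GP a c i).2)

lemma gp_F (a b c : ℤ) (hac : a = b * c) (i : ℕ) :
    intF a b (2 * i) = b ^ i * (GP a c i).1 ∧ intF a b (2 * i + 1) = b ^ i * (GP a c i).2 := by
  induction i with
  | zero => simp [intF, GP]
  | succ i ih =>
    obtain ⟨h1, h2⟩ := ih
    have e1 : 2 * (i + 1) = (2 * i) + 2 := by ring
    have e2 : 2 * (i + 1) + 1 = (2 * i + 1) + 2 := by ring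
    refine ⟨?_, ?_⟩
    · rw [e1, intF, h1, h2]
      simp only [GP]
      rw [hac]; ring
    · rw [e2, intF]
      have e3 : 2 * i + 1 + 1 = 2 * i + 2 := rfl
      rw [e3, intF, h1, h2]
      simp only [GP]
      rw [hac]; ring

lemma gp_pos (a c : ℤ) (ha : 0 < a) (hc : 0 < c) (i : ℕ) :
    0 ≤ (GP a c i).1 ∧ 0 < (GP a c i).2 := by
  induction i with
  | zero => simp [GP]
  | succ i ih =>
    obtain ⟨h1, h2⟩ := ih
    refine ⟨?_, ?_⟩
    · simp only [GP]
      nlinarith [mul_pos hc h2]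
    · simp only [GP]
      nlinarith [mul_nonneg ha.le h1, mul_pos (mul_pos ha hc) h2]

lemma gp_Q (a b c : ℤ) (hac : a = b * c) (i : ℕ) :
    (GP a c i).2 ^ 2 - a * (GP a c i).1 * (GP a c i).2 - b * (GP a c i).1 ^ 2 = 1 := by
  induction i with
  | zero => simp [GP]
  | succ i ih =>
    simp only [GP]
    subst hac
    linear_combination ih

lemma descent (a b c : ℤ) (hb : 0 < b) (hc : 0 < c) (hac : a = b * c) :
    ∀ K : ℕ, ∀ m n : ℤ, m.natAbs ≤ K → 0 ≤ m → 0 < n → IsCoprime m n →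
      0 < n ^ 2 - a * m * n - b * m ^ 2 → n ^ 2 - a * m * n - b * m ^ 2 ≤ b →
      ∃ i, (GP a c i).1 = m ∧ (GP a c i).2 = n := by
  intro K
  induction K with
  | zero =>
    intro m n hK hm hn hcop _ _
    have hm0 : m = 0 := by omega
    subst hm0
    have hu : IsUnit n := by rwa [isCoprime_zero_left] at hcop
    have hn1 : n = 1 ∨ n = -1 := Int.isUnit_iff.mp hu
    have : n = 1 := by omega
    exact ⟨0, by simp [GP, this]⟩
  | succ K ih =>
    intro m n hK hm hn hcop hQpos hQle
    rcases eq_or_lt_of_le hm with hm0 | hm1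
    · have hm0 : m = 0 := hm0.symm
      subst hm0
      have hu : IsUnit n := by rwa [isCoprime_zero_left] at hcop
      have hn1 : n = 1 ∨ n = -1 := Int.isUnit_iff.mp hu
      have : n = 1 := by omega
      exact ⟨0, by simp [GP, this]⟩
    · set n₁ : ℤ := n - a * m with hn₁def
      set m₁ : ℤ := m - c * n₁ with hm₁def
      have key1 : n * n₁ = (n ^ 2 - a * m * n - b * m ^ 2) + b * m ^ 2 := by
        rw [hn₁def]; ring
      have hn₁pos : 0 < n₁ := by
        by_contra h
        push_neg at h
        nlinarith
      have key2 : n ^ 2 - a * m * n - b * m ^ 2 = n₁ ^ 2 - b * m * m₁ := by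
        rw [hm₁def, hn₁def, hac]; ring
      have hm₁nonneg : 0 ≤ m₁ := by
        by_contra h
        push_neg at h
        have h1 : m₁ ≤ -1 := by omega
        have hbm : b ≤ b * m := by nlinarith
        have h2 : b * m * 1 ≤ b * m * (-m₁) := by
          have := mul_pos hb hm1
          nlinarith
        nlinarith [mul_pos hn₁pos hn₁pos]
      have hm₁lt : m₁ < m := by
        have : 1 ≤ c * n₁ := by nlinarith
        omega
      have hcop1 : IsCoprime m n₁ := by
        have h := hcop.add_mul_left_right (-a)
        have : n + m * (-a) = n₁ := by rw [hn₁def]; ring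
        rwa [this] at h
      have hcop2 : IsCoprime m₁ n₁ := by
        have h := hcop1.add_mul_left_left (-c)
        have : m + n₁ * (-c) = m₁ := by rw [hm₁def]; ring
        rwa [this] at h
      have hQeq : n₁ ^ 2 - a * m₁ * n₁ - b * m₁ ^ 2 = n ^ 2 - a * m * n - b * m ^ 2 := by
        rw [hm₁def, hn₁def, hac]; ring
      have hKle : m₁.natAbs ≤ K := by omega
      obtain ⟨i, hi1, hi2⟩ := ih m₁ n₁ hKle hm₁nonneg hn₁pos hcop2
        (by rw [hQeq]; exact hQpos) (by rw [hQeq]; exact hQle)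
      refine ⟨i + 1, ?_, ?_⟩
      · simp only [GP, hi1, hi2]
        rw [hm₁def]; ring
      · simp only [GP, hi1, hi2]
        rw [hm₁def, hn₁def]; ring

theorem integrality_of_f_in_interval_of_convergence
    (a b : ℤ) (ha : 0 < a) (hb : 0 < b) (hba : b ∣ a) (q : ℚ)
    (hq : |(q : ℝ)| < 2 / ((a : ℝ) + Real.sqrt ((a : ℝ) ^ 2 + 4 * (b : ℝ)))) :
    (∃ k : ℤ, q / (1 - (a : ℚ) * q - (b : ℚ) * q ^ 2) = (k : ℚ)) ↔
      ∃ i : ℕ, q = (intF a b (2 * i) : ℚ) / (intF a b (2 * i + 1) : ℚ) := by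
  obtain ⟨c, hac⟩ := hba
  have hc : 0 < c := by nlinarith [hac ▸ ha]
  have hA : (0:ℝ) < (a:ℝ) := by exact_mod_cast ha
  have hB : (0:ℝ) < (b:ℝ) := by exact_mod_cast hb
  set s : ℝ := Real.sqrt ((a : ℝ) ^ 2 + 4 * (b : ℝ)) with hsdef
  have hs0 : 0 ≤ s := Real.sqrt_nonneg _
  have hs2 : s ^ 2 = (a:ℝ)^2 + 4*(b:ℝ) := Real.sq_sqrt (by positivity)
  have hden : (0:ℝ) < (a:ℝ) + s := by linarith
  have habs : |(q:ℝ)| * ((a:ℝ) + s) < 2 := (lt_div_iff₀ hden).mp hq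
  constructor
  · rintro ⟨k, hk⟩
    rcases lt_trichotomy q 0 with hneg | hzero | hpos
    · exfalso
      have hx : (q:ℝ) < 0 := by exact_mod_cast hneg
      rw [abs_of_neg hx] at habs
      have h2 : (-(q:ℝ)) * s < 2 := by nlinarith [mul_pos hA (neg_pos.mpr hx)]
      have h3 : ((q:ℝ))^2 * s^2 < 4 := by nlinarith [mul_nonneg (neg_nonneg.mpr hx.le) hs0]
      have h4 : (b:ℝ) * ((q:ℚ):ℝ)^2 < 1 := by nlinarith [sq_nonneg ((a:ℝ)*(q:ℝ))]
      have hbx : (b:ℚ) * q^2 < 1 := by exact_mod_cast h4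
      have ha1 : (1:ℚ) ≤ (a:ℚ) := by exact_mod_cast ha
      have haq : (0:ℚ) < (a:ℚ) * (-q) := mul_pos (by linarith) (by linarith)
      have hg : 0 < 1 - (a:ℚ)*q - (b:ℚ)*q^2 := by nlinarith
      have hk1 : (k:ℚ) < 0 := hk ▸ div_neg_of_neg_of_pos hneg hg
      have hk2 : -1 < (k:ℚ) := by
        rw [← hk, neg_lt, ← neg_div, div_lt_one hg]
        nlinarith
      have hk0 : k < 0 := by exact_mod_cast hk1
      have : ((-1:ℤ):ℚ) < (k:ℚ) := by exact_mod_cast hk2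
      have : (-1:ℤ) < k := by exact_mod_cast this
      omega
    · exact ⟨0, by simp [hzero, intF]⟩
    · have hx : (0:ℝ) < (q:ℝ) := by exact_mod_cast hpos
      rw [abs_of_pos hx] at habs
      have h2 : (q:ℝ) * s < 2 - (a:ℝ) * (q:ℝ) := by nlinarith
      have h2' : 0 ≤ (q:ℝ) * s := mul_nonneg hx.le hs0
      have h3 : ((q:ℝ) * s)^2 < (2 - (a:ℝ)*(q:ℝ))^2 := by nlinarith
      have h4 : (a:ℝ)*((q:ℚ):ℝ) + (b:ℝ)*((q:ℚ):ℝ)^2 < 1 := by nlinarith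
      have hkey : (a:ℚ)*q + (b:ℚ)*q^2 < 1 := by exact_mod_cast h4
      have hgq : 0 < 1 - (a:ℚ)*q - (b:ℚ)*q^2 := by linarith
      set m : ℤ := q.num with hmdef
      set n : ℤ := (q.den : ℤ) with hndef
      have hn : 0 < n := by rw [hndef]; exact_mod_cast q.pos
      have hm : 0 < m := Rat.num_pos.mpr hpos
      have hn0 : ((n:ℚ)) ≠ 0 := Int.cast_ne_zero.mpr hn.ne'
      have hqden : q = (m:ℚ) / (n:ℚ) := by
        rw [hmdef, hndef]
        push_cast
        exact (Rat.num_div_den q).symm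
      have hqmn : (m:ℚ) = q * (n:ℚ) := by
        rw [hqden]
        field_simp
      have hqk : q = (k:ℚ) * (1 - (a:ℚ)*q - (b:ℚ)*q^2) := (div_eq_iff hgq.ne').mp hk
      have hZ : m * n = k * (n^2 - a*m*n - b*m^2) := by
        have hQ : (m:ℚ) * (n:ℚ) = (k:ℚ) * ((n:ℚ)^2 - (a:ℚ)*(m:ℚ)*(n:ℚ) - (b:ℚ)*(m:ℚ)^2) := by
          rw [hqmn]
          linear_combination ((n:ℚ)^2) * hqk
        exact_mod_cast hQ
      have hdvd : (n^2 - a*m*n - b*m^2) ∣ m * n := ⟨k, by rw [hZ]; ring⟩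
      have hDpos : 0 < n^2 - a*m*n - b*m^2 := by
        have hcast : ((n^2 - a*m*n - b*m^2 : ℤ):ℚ) = (n:ℚ)^2 * (1 - (a:ℚ)*q - (b:ℚ)*q^2) := by
          push_cast
          rw [hqmn]
          ring
        have : (0:ℚ) < ((n^2 - a*m*n - b*m^2 : ℤ):ℚ) := by
          rw [hcast]
          exact mul_pos (by positivity) hgq
        exact_mod_cast this
      have hcop : IsCoprime m n := by
        rw [Int.isCoprime_iff_gcd_eq_one]
        simpa [Int.gcd, hmdef, hndef] using q.reduced
      have hcopD : IsCoprime m (n^2 - a*m*n - b*m^2) := by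
        have h1 : IsCoprime m (n*n) := hcop.mul_right hcop
        have h2 := h1.add_mul_left_right (-(a*n) - b*m)
        have e : n*n + m * (-(a*n) - b*m) = n^2 - a*m*n - b*m^2 := by ring
        rwa [e] at h2
      have hDn : (n^2 - a*m*n - b*m^2) ∣ n := hcopD.symm.dvd_of_dvd_mul_left hdvd
      have hDb : (n^2 - a*m*n - b*m^2) ∣ b := by
        have h1 : (n^2-a*m*n-b*m^2) ∣ b * m^2 := by
          have h0 := dvd_sub (dvd_sub (hDn.mul_left n) (hDn.mul_left (a*m)))
            (dvd_refl (n^2-a*m*n-b*m^2))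
          have e : n*n - a*m*n - (n^2-a*m*n-b*m^2) = b*m^2 := by ring
          rwa [e] at h0
        exact (hcopD.symm.pow_right).dvd_of_dvd_mul_right h1
      have hDle : (n^2-a*m*n-b*m^2) ≤ b := Int.le_of_dvd hb hDb
      obtain ⟨i, hi1, hi2⟩ := descent a b c hb hc hac m.natAbs m n le_rfl hm.le hn hcop hDpos hDle
      refine ⟨i, ?_⟩
      obtain ⟨hF1, hF2⟩ := gp_F a b c hac i
      rw [hF1, hF2, hi1, hi2]
      push_cast
      rw [mul_div_mul_left _ _ (by positivity : ((b:ℚ))^i ≠ 0)]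
      exact hqden
  · rintro ⟨i, rfl⟩
    obtain ⟨hF1, hF2⟩ := gp_F a b c hac i
    obtain ⟨hgm, hgn⟩ := gp_pos a c ha hc i
    have hQ1 := gp_Q a b c hac i
    set m : ℤ := (GP a c i).1 with hmdef
    set n : ℤ := (GP a c i).2 with hndef
    have hn0 : ((n:ℚ)) ≠ 0 := Int.cast_ne_zero.mpr hgn.ne'
    have hb0 : ((b:ℚ))^i ≠ 0 := by
      have : ((b:ℚ)) ≠ 0 := Int.cast_ne_zero.mpr hb.ne'
      positivity
    rw [hF1, hF2]
    push_cast
    rw [mul_div_mul_left _ _ hb0]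
    refine ⟨m * n, ?_⟩
    have hQq : ((n:ℚ)^2 - (a:ℚ)*(m:ℚ)*(n:ℚ) - (b:ℚ)*(m:ℚ)^2) = 1 := by exact_mod_cast hQ1
    have hden2 : (1:ℚ) - (a:ℚ)*((m:ℚ)/(n:ℚ)) - (b:ℚ)*((m:ℚ)/(n:ℚ))^2 = 1/(n:ℚ)^2 := by
      field_simp
      linear_combination hQq
    rw [hden2]
    push_cast
    field_simp
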